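/- In the HRRU model, the empirical mean M_n = (1/n) ∑_{j=1}^n X_j/N_j converges almost surely and in L¹ to the same random variable Z that is the almost sure limit of the proportions Z_n. -/

import Mathlib

open MeasureTheory ProbabilityTheory Filter
open scoped Topology

noncomputable section

/-- Total number of balls at time `n` in the HRRU model with initial composition
`a + b` and draws/reinforcements `N`, `R` (time is indexed from `1`). -/
def hrruS {Ω : Type*} (a b : ℕ) (N R : ℕ → Ω → ℕ) (n : ℕ) (ω : Ω) : ℕ :=
  a + b + ∑ j ∈ Finset.Icc 1 n, N j ω * R j ω

/-- Number of balls of color A at time `n` in the HRRU model. -/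
def hrruHa {Ω : Type*} (a : ℕ) (X R : ℕ → Ω → ℕ) (n : ℕ) (ω : Ω) : ℕ :=
  a + ∑ j ∈ Finset.Icc 1 n, X j ω * R j ω

/-- Proportion of balls of color A at time `n` in the HRRU model. -/
def hrruZ {Ω : Type*} (a b : ℕ) (N X R : ℕ → Ω → ℕ) (n : ℕ) (ω : Ω) : ℝ :=
  (hrruHa a X R n ω : ℝ) / (hrruS a b N R n ω : ℝ)

/-- The hypergeometric probability mass function with parameters `Np, S, H`:
`P(X = k) = C(H,k) C(S-H, Np-k) / C(S,Np)`. -/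
def hypergeomPMF (Np S H k : ℕ) : ℝ :=
  ((H.choose k : ℝ) * ((S - H).choose (Np - k) : ℝ)) / (S.choose Np : ℝ)

/-- The natural filtration `ℱ n = σ(N₁,X₁,R₁,…,N_n,X_n,R_n)` of the HRRU model. -/
def hrruF {Ω : Type*} (N X R : ℕ → Ω → ℕ) (n : ℕ) : MeasurableSpace Ω :=
  ⨆ j ∈ Finset.Icc 1 n,
    (MeasurableSpace.comap (N j) ⊤ ⊔ MeasurableSpace.comap (X j) ⊤ ⊔
      MeasurableSpace.comap (R j) ⊤)

/-- The σ-field `𝒢 (n-1) = ℱ (n-1) ∨ σ(N n)` of the HRRU model. -/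
def hrruG {Ω : Type*} (N X R : ℕ → Ω → ℕ) (n : ℕ) : MeasurableSpace Ω :=
  hrruF N X R n ⊔ MeasurableSpace.comap (N (n + 1)) ⊤

/-- The σ-field `ℋ (n-1) = ℱ (n-1) ∨ σ(N n) ∨ σ(R n)` of the HRRU model. -/
def hrruHfilt {Ω : Type*} (N X R : ℕ → Ω → ℕ) (n : ℕ) : MeasurableSpace Ω :=
  hrruG N X R n ⊔ MeasurableSpace.comap (R (n + 1)) ⊤

/-- The HRRU (Hypergeometric Randomly Reinforced Urn) model: an urn starts with
`a ≥ 1` balls of color A and `b ≥ 1` balls of color B.  At each time `n ≥ 1`,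
`N n` balls are drawn without replacement, `X n` of them being of color A, and
the drawn balls are returned together with `R n * X n` balls of color A and
`R n * (N n - X n)` balls of color B. -/
structure IsHRRU {Ω : Type*} [m0 : MeasurableSpace Ω] (μ : Measure Ω)
    (a b : ℕ) (N X R : ℕ → Ω → ℕ) : Prop where
  ha : 1 ≤ a
  hb : 1 ≤ b
  measN : ∀ n, Measurable (N n)
  measX : ∀ n, Measurable (X n)
  measR : ∀ n, Measurable (R n)
  /-- (i): `N n` takes values in `{1, …, S (n-1)}`. -/
  rangeN : ∀ n, 1 ≤ n → ∀ ω, 1 ≤ N n ω ∧ N n ω ≤ hrruS a b N R (n - 1) ω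
  /-- `X n ≤ N n`: one cannot extract more A-balls than balls. -/
  rangeX : ∀ n, 1 ≤ n → ∀ ω, X n ω ≤ N n ω
  /-- `R n ∈ ℕ ∖ {0}`. -/
  rangeR : ∀ n, 1 ≤ n → ∀ ω, 1 ≤ R n ω
  /-- (ii): the conditional distribution of `X n` given
  `ℱ (n-1) ∨ σ(N n)` is hypergeometric with parameters `N n, S (n-1), H (n-1)`. -/
  hypergeom : ∀ n, 1 ≤ n → ∀ k : ℕ,
    (μ[fun ω => if X n ω = k then (1 : ℝ) else 0|hrruG N X R (n - 1)]) =ᵐ[μ]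
      fun ω => hypergeomPMF (N n ω) (hrruS a b N R (n - 1) ω) (hrruHa a X R (n - 1) ω) k
  /-- (iii): `R n` is independent of `(N₁,X₁,R₁,…,N_{n-1},X_{n-1},R_{n-1},N_n,X_n)`. -/
  indepR : ∀ n, 1 ≤ n →
    Indep (MeasurableSpace.comap (R n) ⊤)
      (hrruG N X R (n - 1) ⊔ MeasurableSpace.comap (X n) ⊤) μ

/-!
Write `Y j = X j / N j - Z (j - 1)`. Given the past and `N j`, the draw `X j` is hypergeometric
with mean `N j * H (j - 1) / S (j - 1)`, so `E[X j / N j | 𝒢 (j - 1)] = Z (j - 1)`: the `Y j` are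
martingale differences bounded by `1`. They are therefore orthogonal in `L²`, whence
`E[(Y 1 + ⋯ + Y n)²] ≤ n`; Borel–Cantelli along the squares `n = m²` and interpolation between
consecutive squares give `(Y 1 + ⋯ + Y n) / n → 0` almost surely. So `M n` is, up to a vanishing
error, the Cesàro mean of `Z 0, …, Z (n - 1)`, which tends to `Z`. Since `0 ≤ M n ≤ 1`, bounded
convergence upgrades this to convergence in `L¹`.
-/

open Finset in
theorem Nat.sum_mul_choose_mul_choose (H K m : ℕ) :
    ∑ k ∈ range (m + 2), k * (H.choose k * K.choose (m + 1 - k)) =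
      H * (H + K - 1).choose m := by
  cases H with
  | zero =>
    rw [zero_mul]
    exact Finset.sum_eq_zero fun i _ => by rcases i with _ | i <;> simp
  | succ H =>
    -- absorb the factor `k` by `k * C(H + 1, k) = (H + 1) * C(H, k - 1)`, then Vandermonde
    have hK : H + 1 + K - 1 = H + K := by omega
    rw [sum_range_succ', hK, Nat.add_choose_eq H K m, Nat.sum_antidiagonal_eq_sum_range_succ_mk,
      mul_sum, zero_mul, add_zero]
    refine sum_congr rfl fun i _ => ?_
    rw [Nat.add_sub_add_right, ← mul_assoc, ← mul_assoc, mul_comm (i + 1),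
      ← Nat.add_one_mul_choose_eq]

theorem sum_mul_hypergeomPMF {m S H : ℕ} (hm : 1 ≤ m) (hmS : m ≤ S) (hHS : H ≤ S) :
    ∑ k ∈ Finset.range (m + 1), (k : ℝ) * hypergeomPMF m S H k = m * H / S := by
  obtain ⟨m, rfl⟩ := Nat.exists_eq_add_of_le' hm
  obtain ⟨S, rfl⟩ := Nat.exists_eq_add_of_le' (hm.trans hmS)
  have hsum := Nat.sum_mul_choose_mul_choose H (S + 1 - H) m
  rw [Nat.add_sub_cancel' hHS, Nat.add_sub_cancel] at hsum
  have hpascal := Nat.add_one_mul_choose_eq S m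
  have hchoose : ((S + 1).choose (m + 1) : ℝ) ≠ 0 := by
    exact_mod_cast (Nat.choose_pos hmS).ne'
  simp only [hypergeomPMF, ← mul_div_assoc, ← Finset.sum_div]
  rw [div_eq_div_iff hchoose (by positivity)]
  exact_mod_cast by rw [hsum]; linear_combination H * hpascal

theorem abs_sum_Icc_sub_sum_Icc_le {u : ℕ → ℝ} {C : ℝ} (hu : ∀ j, 1 ≤ j → |u j| ≤ C) {k n : ℕ}
    (hkn : k ≤ n) :
    |∑ j ∈ Finset.Icc 1 n, u j - ∑ j ∈ Finset.Icc 1 k, u j| ≤ C * (n - k : ℕ) := by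
  have hIoc (m : ℕ) : Finset.Icc 1 m = Finset.Ioc 0 m := Finset.Icc_add_one_left_eq_Ioc 0 m
  rw [hIoc, hIoc, ← Finset.sum_Ioc_consecutive u k.zero_le hkn, add_sub_cancel_left]
  calc |∑ j ∈ Finset.Ioc k n, u j| ≤ ∑ j ∈ Finset.Ioc k n, |u j| := Finset.abs_sum_le_sum_abs _ _
    _ ≤ ∑ j ∈ Finset.Ioc k n, C := Finset.sum_le_sum fun j hj => hu j (by grind)
    _ = C * (n - k : ℕ) := by simp [mul_comm]

theorem abs_sum_Icc_le {u : ℕ → ℝ} {C : ℝ} (hu : ∀ j, 1 ≤ j → |u j| ≤ C) (n : ℕ) :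
    |∑ j ∈ Finset.Icc 1 n, u j| ≤ C * n := by
  simpa using abs_sum_Icc_sub_sum_Icc_le hu n.zero_le

theorem abs_inv_mul_sum_Icc_le {u : ℕ → ℝ} {C : ℝ} (hu : ∀ j, 1 ≤ j → |u j| ≤ C) (n : ℕ) :
    |(n : ℝ)⁻¹ * ∑ j ∈ Finset.Icc 1 n, u j| ≤ C := by
  rcases n.eq_zero_or_pos with rfl | hn
  · simpa using (abs_nonneg _).trans (hu 1 le_rfl)
  · rw [abs_mul, abs_inv, Nat.abs_cast, inv_mul_le_iff₀ (Nat.cast_pos.2 hn), mul_comm]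
    exact abs_sum_Icc_le hu n

theorem tendsto_sum_Icc_div_of_tendsto_sq {u : ℕ → ℝ} {C : ℝ} (hu : ∀ j, 1 ≤ j → |u j| ≤ C)
    (h : Tendsto (fun m : ℕ => (∑ j ∈ Finset.Icc 1 (m ^ 2), u j) / (m : ℝ) ^ 2) atTop (𝓝 0)) :
    Tendsto (fun n : ℕ => (∑ j ∈ Finset.Icc 1 n, u j) / n) atTop (𝓝 0) := by
  set T : ℕ → ℝ := fun n => ∑ j ∈ Finset.Icc 1 n, u j
  have hC : 0 ≤ C := (abs_nonneg _).trans (hu 1 le_rfl)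
  have hbound : ∀ n, 1 ≤ n →
      ‖T n / n‖ ≤ |T (n.sqrt ^ 2) / (n.sqrt : ℝ) ^ 2| + 2 * C / n.sqrt := by
    intro n hn
    set s := n.sqrt
    have hs : 0 < s := Nat.sqrt_pos.2 hn
    have hsn : s ^ 2 ≤ n := Nat.sqrt_le' n
    have hgap : ((n - s ^ 2 : ℕ) : ℝ) ≤ 2 * s := by
      have := Nat.lt_succ_sqrt' n
      exact_mod_cast (by grind : n - s ^ 2 ≤ 2 * s)
    have hsn' : (s : ℝ) ^ 2 ≤ n := by exact_mod_cast hsn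
    have hT : |T n| ≤ |T (s ^ 2)| + 2 * C * s := by
      have := abs_sum_Icc_sub_sum_Icc_le hu hsn
      have := abs_sub_abs_le_abs_sub (T n) (T (s ^ 2))
      nlinarith
    calc ‖T n / n‖ = |T n| / n := by rw [Real.norm_eq_abs, abs_div, Nat.abs_cast]
      _ ≤ (|T (s ^ 2)| + 2 * C * s) / (s : ℝ) ^ 2 := by
          gcongr
      _ = |T (s ^ 2) / (s : ℝ) ^ 2| + 2 * C / s := by
          rw [abs_div, abs_of_pos (by positivity : (0 : ℝ) < (s : ℝ) ^ 2)]
          field_simp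
  refine squeeze_zero_norm' (eventually_atTop.2 ⟨1, hbound⟩) ?_
  have hsqrt : Tendsto Nat.sqrt atTop atTop :=
    tendsto_atTop_atTop.2 fun k => ⟨k ^ 2, fun n hn => Nat.le_sqrt'.2 hn⟩
  simpa using (h.comp hsqrt).abs.add
    ((tendsto_const_div_atTop_nhds_zero_nat (2 * C)).comp hsqrt)

theorem Finset.sum_Icc_one_sub_one {M : Type*} [AddCommMonoid M] (f : ℕ → M) (n : ℕ) :
    ∑ j ∈ Finset.Icc 1 n, f (j - 1) = ∑ i ∈ Finset.range n, f i := by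
  induction n with
  | zero => simp
  | succ n ih =>
    rw [Finset.sum_Icc_succ_top (by omega), ih, Finset.sum_range_succ, Nat.add_sub_cancel]

theorem Nat.cast_div_mem_Icc_zero_one {p q : ℕ} (h : p ≤ q) : (p : ℝ) / q ∈ Set.Icc 0 1 :=
  ⟨by positivity, div_le_one_of_le₀ (by exact_mod_cast h) (by positivity)⟩

theorem Nat.abs_cast_div_le_one {p q : ℕ} (h : p ≤ q) : |(p : ℝ) / q| ≤ 1 := by
  rw [abs_of_nonneg (by positivity)]
  exact (Nat.cast_div_mem_Icc_zero_one h).2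

namespace MeasureTheory

variable {Ω : Type*} {m m0 : MeasurableSpace Ω} {μ : Measure Ω}

theorem condExp_comp_eq_sum_of_condExp_ite [IsFiniteMeasure μ] {N X : Ω → ℕ}
    (hN : Measurable[m] N) (hX : Measurable X) (hXN : ∀ ω, X ω ≤ N ω) (g : ℕ → ℕ → ℝ)
    (hg : Integrable (fun ω => g (N ω) (X ω)) μ)
    (p : ℕ → Ω → ℝ) (hp : ∀ k, μ[fun ω => if X ω = k then (1 : ℝ) else 0|m] =ᵐ[μ] p k) :
    μ[fun ω => g (N ω) (X ω)|m] =ᵐ[μ]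
      fun ω => ∑ k ∈ Finset.range (N ω + 1), g (N ω) k * p k ω := by
  set e : ℕ → Ω → ℝ := fun k ω => if X ω = k then 1 else 0
  have he : ∀ k, Integrable (e k) μ := fun k =>
    .of_bound (Measurable.ite (hX (measurableSet_singleton k)) measurable_const
      measurable_const).aestronglyMeasurable 1
      (ae_of_all _ fun ω => by by_cases hk : X ω = k <;> simp [e, hk])
  suffices ∀ n, ∀ᵐ ω ∂μ, N ω = n →
      μ[fun ω => g (N ω) (X ω)|m] ω = ∑ k ∈ Finset.range (n + 1), g n k * p k ω by
    filter_upwards [ae_all_iff.2 this] with ω hω using hω _ rfl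
  intro n
  set A := N ⁻¹' {n}
  have hA : MeasurableSet[m] A := hN (measurableSet_singleton n)
  -- on `{N = n}` the integrand is a finite combination of the indicators `e k`, `k ≤ n`
  set h : Ω → ℝ := ∑ k ∈ Finset.range (n + 1), g n k • e k
  have hfh : A.indicator (fun ω => g (N ω) (X ω)) = A.indicator h := by
    refine Set.indicator_congr fun ω (hω : N ω = n) => ?_
    have hXn : X ω ∈ Finset.range (n + 1) := Finset.mem_range_succ_iff.2 (hω ▸ hXN ω)
    simp [h, e, Finset.sum_apply, hω, hXn]
  have hh : Integrable h μ := integrable_finsetSum' _ fun k _ => (he k).smul _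
  have hcond_h : μ[h|m] =ᵐ[μ] ∑ k ∈ Finset.range (n + 1), g n k • p k := by
    have hk : ∀ k, μ[g n k • e k|m] =ᵐ[μ] g n k • p k := fun k =>
      (condExp_smul _ _ _).trans ((hp k).const_smul _)
    filter_upwards [ae_all_iff.2 hk, condExp_finsetSum (s := Finset.range (n + 1))
      (f := fun k => g n k • e k) (fun k _ => (he k).smul _) m] with ω h1 h2
    rw [h2, Finset.sum_apply, Finset.sum_apply]
    exact Finset.sum_congr rfl fun k _ => h1 k
  filter_upwards [condExp_indicator hg hA, condExp_indicator hh hA, hcond_h]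
    with ω h1 h2 h3 (hω : ω ∈ A)
  calc μ[fun ω => g (N ω) (X ω)|m] ω
      = μ[A.indicator fun ω => g (N ω) (X ω)|m] ω := by rw [h1, Set.indicator_of_mem hω]
    _ = μ[h|m] ω := by rw [hfh, h2, Set.indicator_of_mem hω]
    _ = ∑ k ∈ Finset.range (n + 1), g n k * p k ω := by simp [h3, Finset.sum_apply]

theorem integral_mul_eq_zero_of_condExp_eq_zero (hm : m ≤ m0)
    [SigmaFinite (μ.trim hm)] {f g : Ω → ℝ} (hf : StronglyMeasurable[m] f)
    (hfg : Integrable (f * g) μ) (hg : Integrable g μ) (hcond : μ[g|m] =ᵐ[μ] 0) :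
    ∫ ω, f ω * g ω ∂μ = 0 := by
  change ∫ ω, (f * g) ω ∂μ = 0
  rw [← integral_condExp hm]
  refine integral_eq_zero_of_ae ?_
  filter_upwards [condExp_mul_of_stronglyMeasurable_left hf hfg hg, hcond] with ω h1 h2
  simp [h1, h2]

theorem integral_sq_sum_le_of_condExp_eq_zero {ι : Type*} [LinearOrder ι] [IsProbabilityMeasure μ]
    {Y : ι → Ω → ℝ} {𝒢 : ι → MeasurableSpace Ω} {C : ℝ} {s : Finset ι}
    (h𝒢 : ∀ j ∈ s, 𝒢 j ≤ m0) (hY : ∀ j ∈ s, AEStronglyMeasurable (Y j) μ)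
    (hbdd : ∀ j ∈ s, ∀ ω, |Y j ω| ≤ C)
    (hadapted : ∀ i ∈ s, ∀ j ∈ s, i < j → StronglyMeasurable[𝒢 j] (Y i))
    (hcond : ∀ j ∈ s, μ[Y j|𝒢 j] =ᵐ[μ] 0) :
    ∫ ω, (∑ j ∈ s, Y j ω) ^ 2 ∂μ ≤ s.card * C ^ 2 := by
  have hint : ∀ j ∈ s, Integrable (Y j) μ := fun j hj =>
    .of_bound (hY j hj) C (ae_of_all _ (hbdd j hj))
  have hprod : ∀ i ∈ s, ∀ j ∈ s, Integrable (fun ω => Y i ω * Y j ω) μ := fun i hi j hj =>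
    .of_bound ((hY i hi).mul (hY j hj)) (C * C) (ae_of_all _ fun ω => by
      simpa [abs_mul] using mul_le_mul (hbdd i hi ω) (hbdd j hj ω) (abs_nonneg _)
        ((abs_nonneg _).trans (hbdd i hi ω)))
  have horth : ∀ i ∈ s, ∀ j ∈ s, i < j → ∫ ω, Y i ω * Y j ω ∂μ = 0 := fun i hi j hj hij =>
    integral_mul_eq_zero_of_condExp_eq_zero (h𝒢 j hj) (hadapted i hi j hj hij) (hprod i hi j hj)
      (hint j hj) (hcond j hj)
  have hdiag : ∀ i ∈ s, ∫ ω, Y i ω * Y i ω ∂μ ≤ C ^ 2 := fun i hi => by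
    calc ∫ ω, Y i ω * Y i ω ∂μ ≤ ∫ _, C ^ 2 ∂μ :=
          integral_mono (hprod i hi i hi) (integrable_const _) fun ω => by
            simpa [← sq, sq_abs] using pow_le_pow_left₀ (abs_nonneg _) (hbdd i hi ω) 2
      _ = C ^ 2 := by simp
  calc ∫ ω, (∑ j ∈ s, Y j ω) ^ 2 ∂μ
      = ∑ i ∈ s, ∑ j ∈ s, ∫ ω, Y i ω * Y j ω ∂μ := by
        simp_rw [sq, Finset.sum_mul_sum]
        rw [integral_finsetSum _ fun i hi => integrable_finsetSum _ fun j hj => hprod i hi j hj]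
        exact Finset.sum_congr rfl fun i hi => integral_finsetSum _ fun j hj => hprod i hi j hj
    _ = ∑ i ∈ s, ∫ ω, Y i ω * Y i ω ∂μ := by
        refine Finset.sum_congr rfl fun i hi => Finset.sum_eq_single_of_mem i hi fun j hj hji => ?_
        rcases hji.lt_or_gt with hlt | hgt
        · simpa only [mul_comm] using horth j hj i hi hlt
        · exact horth i hi j hj hgt
    _ ≤ s.card * C ^ 2 := by
        simpa using Finset.sum_le_card_nsmul s _ _ hdiag

open scoped ENNReal in
theorem ae_tendsto_zero_of_tsum_lintegral_ne_top {f : ℕ → Ω → ℝ≥0∞}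
    (hf : ∀ n, AEMeasurable (f n) μ) (hsum : ∑' n, ∫⁻ ω, f n ω ∂μ ≠ ∞) :
    ∀ᵐ ω ∂μ, Tendsto (fun n => f n ω) atTop (𝓝 0) := by
  rw [← lintegral_tsum hf] at hsum
  filter_upwards [ae_lt_top' (AEMeasurable.tsum hf) hsum] with ω hω
  exact ENNReal.tendsto_atTop_zero_of_tsum_ne_top hω.ne

theorem ae_tendsto_zero_of_summable_integral_sq {f : ℕ → Ω → ℝ}
    (hf : ∀ n, AEMeasurable (f n) μ) (hint : ∀ n, Integrable (fun ω => f n ω ^ 2) μ)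
    (hsum : Summable fun n => ∫ ω, f n ω ^ 2 ∂μ) :
    ∀ᵐ ω ∂μ, Tendsto (fun n => f n ω) atTop (𝓝 0) := by
  have hlint : ∑' n, ∫⁻ ω, ENNReal.ofReal (f n ω ^ 2) ∂μ ≠ ⊤ := by
    simp_rw [← ofReal_integral_eq_lintegral_ofReal (hint _) (ae_of_all _ fun _ => sq_nonneg _),
      ← ENNReal.ofReal_tsum_of_nonneg (fun n => integral_nonneg fun _ => sq_nonneg _) hsum]
    exact ENNReal.ofReal_ne_top
  filter_upwards [ae_tendsto_zero_of_tsum_lintegral_ne_top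
    (fun n => ((hf n).pow_const 2).ennreal_ofReal) hlint] with ω hω
  have hsq : Tendsto (fun n => f n ω ^ 2) atTop (𝓝 0) := by
    refine ((ENNReal.tendsto_toReal ENNReal.zero_ne_top).comp hω).congr fun n => ?_
    simp [ENNReal.toReal_ofReal (sq_nonneg _)]
  refine (tendsto_zero_iff_abs_tendsto_zero _).2 ?_
  simpa [Function.comp_def, Real.sqrt_sq_eq_abs] using hsq.sqrt

theorem ae_tendsto_sum_Icc_div_of_integral_sq_le [IsFiniteMeasure μ] {Y : ℕ → Ω → ℝ} {C K : ℝ}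
    (hY : ∀ j, AEMeasurable (Y j) μ) (hbdd : ∀ j, 1 ≤ j → ∀ ω, |Y j ω| ≤ C)
    (hL2 : ∀ n, ∫ ω, (∑ j ∈ Finset.Icc 1 n, Y j ω) ^ 2 ∂μ ≤ K * n) :
    ∀ᵐ ω ∂μ, Tendsto (fun n : ℕ => (∑ j ∈ Finset.Icc 1 n, Y j ω) / n) atTop (𝓝 0) := by
  set v : ℕ → Ω → ℝ := fun m ω => (∑ j ∈ Finset.Icc 1 (m ^ 2), Y j ω) / (m : ℝ) ^ 2
  have hv : ∀ m, AEMeasurable (v m) μ := fun m => by fun_prop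
  have hv_le : ∀ m ω, |v m ω| ≤ C := fun m ω => by
    have hC : 0 ≤ C := (abs_nonneg _).trans (hbdd 1 le_rfl ω)
    have hT := abs_sum_Icc_le (fun j hj => hbdd j hj ω) (m ^ 2)
    rcases m.eq_zero_or_pos with rfl | hm
    · simpa [v] using hC
    · have hm2 : (0 : ℝ) < (m : ℝ) ^ 2 := pow_pos (Nat.cast_pos.2 hm) 2
      rw [abs_div, abs_of_pos hm2, div_le_iff₀ hm2]
      exact_mod_cast hT
  have hv_sq : ∀ m, Integrable (fun ω => v m ω ^ 2) μ := fun m =>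
    .of_bound ((hv m).pow_const 2).aestronglyMeasurable (C ^ 2) (ae_of_all _ fun ω => by
      simpa [sq_abs] using pow_le_pow_left₀ (abs_nonneg _) (hv_le m ω) 2)
  have hv_L2 : ∀ m, ∫ ω, v m ω ^ 2 ∂μ ≤ K * (1 / (m : ℝ) ^ 2) := fun m => by
    rcases m.eq_zero_or_pos with rfl | hm
    · simp [v]
    · simp only [v, div_pow, integral_div]
      rw [div_le_iff₀ (pow_pos (pow_pos (Nat.cast_pos.2 hm) 2) 2)]
      calc ∫ ω, (∑ j ∈ Finset.Icc 1 (m ^ 2), Y j ω) ^ 2 ∂μ ≤ K * (m ^ 2 : ℕ) := hL2 _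
        _ = K * (1 / (m : ℝ) ^ 2) * ((m : ℝ) ^ 2) ^ 2 := by field_simp; push_cast; ring
  have hsum : Summable fun m => ∫ ω, v m ω ^ 2 ∂μ :=
    .of_nonneg_of_le (fun m => integral_nonneg fun _ => sq_nonneg _) hv_L2
      ((Real.summable_one_div_nat_pow.2 one_lt_two).mul_left K)
  filter_upwards [ae_tendsto_zero_of_summable_integral_sq hv hv_sq hsum] with ω hω
  exact tendsto_sum_Icc_div_of_tendsto_sq (fun j hj => hbdd j hj ω) hω

theorem tendsto_integral_abs_sub_of_ae_tendsto [IsFiniteMeasure μ] {F : ℕ → Ω → ℝ} {f : Ω → ℝ}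
    {C : ℝ} (hF : ∀ n, AEStronglyMeasurable (F n) μ) (hbdd : ∀ n ω, |F n ω| ≤ C)
    (hlim : ∀ᵐ ω ∂μ, Tendsto (fun n => F n ω) atTop (𝓝 (f ω))) :
    Tendsto (fun n => ∫ ω, |F n ω - f ω| ∂μ) atTop (𝓝 0) := by
  have hf : AEStronglyMeasurable f μ := aestronglyMeasurable_of_tendsto_ae _ hF hlim
  have hf_le : ∀ᵐ ω ∂μ, |f ω| ≤ C := by
    filter_upwards [hlim] with ω hω using le_of_tendsto' hω.abs fun n => hbdd n ω
  have hdom : ∀ n, ∀ᵐ ω ∂μ, ‖|F n ω - f ω|‖ ≤ 2 * C := fun n => by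
    filter_upwards [hf_le] with ω hω
    rw [Real.norm_eq_abs, abs_abs]
    linarith [abs_sub (F n ω) (f ω), hbdd n ω]
  simpa using tendsto_integral_of_dominated_convergence (f := fun _ => 0) (fun _ => 2 * C)
    (fun n => ((hF n).sub hf).norm) (integrable_const _) hdom
    (by filter_upwards [hlim] with ω hω using by simpa using (hω.sub_const (f ω)).abs)

end MeasureTheory

section HRRU

variable {Ω : Type*} {a b : ℕ} {N X R : ℕ → Ω → ℕ} {j n : ℕ}

theorem measurable_hrruF_N (hj : j ∈ Finset.Icc 1 n) : Measurable[hrruF N X R n] (N j) :=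
  .of_comap_le (le_iSup₂_of_le j hj (le_sup_left.trans le_sup_left))

theorem measurable_hrruF_X (hj : j ∈ Finset.Icc 1 n) : Measurable[hrruF N X R n] (X j) :=
  .of_comap_le (le_iSup₂_of_le j hj (le_sup_right.trans le_sup_left))

theorem measurable_hrruF_R (hj : j ∈ Finset.Icc 1 n) : Measurable[hrruF N X R n] (R j) :=
  .of_comap_le (le_iSup₂_of_le j hj le_sup_right)

theorem hrruF_mono {m n : ℕ} (hmn : m ≤ n) : hrruF N X R m ≤ hrruF N X R n :=
  iSup₂_le fun j hj =>
    le_iSup₂_of_le (f := fun j (_ : j ∈ Finset.Icc 1 n) => _) j (by grind) le_rfl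

theorem hrruF_le_hrruG (n : ℕ) : hrruF N X R n ≤ hrruG N X R n :=
  le_sup_left

theorem measurable_hrruZ (a b n : ℕ) : Measurable[hrruF N X R n] (hrruZ a b N X R n) := by
  have hHa : Measurable[hrruF N X R n] (hrruHa a X R n) := measurable_const.add
    (Finset.measurable_fun_sum _ fun j hj => (measurable_hrruF_X hj).mul (measurable_hrruF_R hj))
  have hS : Measurable[hrruF N X R n] (hrruS a b N R n) := measurable_const.add
    (Finset.measurable_fun_sum _ fun j hj => (measurable_hrruF_N hj).mul (measurable_hrruF_R hj))
  unfold hrruZ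
  fun_prop

theorem hrruHa_le_hrruS (hX : ∀ j, 1 ≤ j → ∀ ω, X j ω ≤ N j ω) (n : ℕ) (ω : Ω) :
    hrruHa a X R n ω ≤ hrruS a b N R n ω := by
  unfold hrruHa hrruS
  gcongr with j hj
  · omega
  · exact hX j (Finset.mem_Icc.1 hj).1 ω

theorem hrruZ_mem_Icc (hX : ∀ j, 1 ≤ j → ∀ ω, X j ω ≤ N j ω) (n : ℕ) (ω : Ω) :
    hrruZ a b N X R n ω ∈ Set.Icc 0 1 :=
  Nat.cast_div_mem_Icc_zero_one (hrruHa_le_hrruS hX n ω)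

def hrruY (a b : ℕ) (N X R : ℕ → Ω → ℕ) (j : ℕ) (ω : Ω) : ℝ :=
  (X j ω : ℝ) / N j ω - hrruZ a b N X R (j - 1) ω

theorem measurable_hrruF_hrruY (hj : j ∈ Finset.Icc 1 n) :
    Measurable[hrruF N X R n] (hrruY a b N X R j) := by
  have hZ := (measurable_hrruZ (N := N) (X := X) (R := R) a b (j - 1)).mono
    (hrruF_mono (m := j - 1) (n := n) (by grind)) le_rfl
  have hXj := measurable_hrruF_X (N := N) (X := X) (R := R) hj
  have hNj := measurable_hrruF_N (N := N) (X := X) (R := R) hj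
  unfold hrruY
  fun_prop

end HRRU

namespace IsHRRU

variable {Ω : Type*} [m0 : MeasurableSpace Ω] {μ : Measure Ω} {a b : ℕ} {N X R : ℕ → Ω → ℕ}
  {j n : ℕ}

theorem hrruF_le (h : IsHRRU μ a b N X R) (n : ℕ) : hrruF N X R n ≤ m0 :=
  iSup₂_le fun j _ =>
    sup_le (sup_le (h.measN j).comap_le (h.measX j).comap_le) (h.measR j).comap_le

theorem hrruG_le (h : IsHRRU μ a b N X R) (n : ℕ) : hrruG N X R n ≤ m0 :=
  sup_le (h.hrruF_le n) (h.measN _).comap_le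

theorem measurable_hrruY (h : IsHRRU μ a b N X R) (j : ℕ) : Measurable (hrruY a b N X R j) := by
  have hZ := (measurable_hrruZ (N := N) (X := X) (R := R) a b (j - 1)).mono (h.hrruF_le _) le_rfl
  have hXj := h.measX j
  have hNj := h.measN j
  unfold hrruY
  fun_prop

theorem abs_hrruY_le_one (h : IsHRRU μ a b N X R) (hj : 1 ≤ j) (ω : Ω) :
    |hrruY a b N X R j ω| ≤ 1 := by
  obtain ⟨hr₀, hr₁⟩ := Nat.cast_div_mem_Icc_zero_one (h.rangeX j hj ω)
  obtain ⟨hz₀, hz₁⟩ := hrruZ_mem_Icc (a := a) (b := b) h.rangeX (j - 1) ω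
  exact abs_sub_le_of_nonneg_of_le hr₀ hr₁ hz₀ hz₁

theorem integrable_div [IsFiniteMeasure μ] (h : IsHRRU μ a b N X R) (hn : 1 ≤ n) :
    Integrable (fun ω => (X n ω : ℝ) / N n ω) μ := by
  have := h.measX n
  have := h.measN n
  exact .of_bound (by fun_prop : Measurable fun ω => (X n ω : ℝ) / N n ω).aestronglyMeasurable 1
    (ae_of_all _ fun ω => Nat.abs_cast_div_le_one (h.rangeX n hn ω))

theorem condExp_div_eq_hrruZ [IsFiniteMeasure μ] (h : IsHRRU μ a b N X R) (hn : 1 ≤ n) :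
    μ[fun ω => (X n ω : ℝ) / N n ω|hrruG N X R (n - 1)] =ᵐ[μ] hrruZ a b N X R (n - 1) := by
  have hN : Measurable[hrruG N X R (n - 1)] (N n) :=
    .of_comap_le (by rw [hrruG, Nat.sub_add_cancel hn]; exact le_sup_right)
  filter_upwards [condExp_comp_eq_sum_of_condExp_ite hN (h.measX n) (h.rangeX n hn)
    (fun m k => (k : ℝ) / m) (h.integrable_div hn) _ (h.hypergeom n hn)] with ω hω
  obtain ⟨hN₁, hNS⟩ := h.rangeN n hn ω
  have hS : (0 : ℝ) < hrruS a b N R (n - 1) ω := by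
    exact_mod_cast hN₁.trans_lt' (by omega) |>.trans_le hNS
  rw [hω, hrruZ]
  simp only [div_mul_eq_mul_div, ← Finset.sum_div,
    sum_mul_hypergeomPMF hN₁ hNS (hrruHa_le_hrruS h.rangeX _ ω)]
  field_simp

theorem condExp_hrruY [IsFiniteMeasure μ] (h : IsHRRU μ a b N X R) (hj : 1 ≤ j) :
    μ[hrruY a b N X R j|hrruG N X R (j - 1)] =ᵐ[μ] 0 := by
  have hZ : StronglyMeasurable[hrruG N X R (j - 1)] (hrruZ a b N X R (j - 1)) :=
    ((measurable_hrruZ a b (j - 1)).mono (hrruF_le_hrruG _) le_rfl).stronglyMeasurable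
  have hZint : Integrable (hrruZ a b N X R (j - 1)) μ :=
    .of_bound (hZ.mono (h.hrruG_le _)).aestronglyMeasurable 1 (ae_of_all _ fun ω =>
      Nat.abs_cast_div_le_one (hrruHa_le_hrruS h.rangeX _ ω))
  have hY : hrruY a b N X R j = (fun ω => (X j ω : ℝ) / N j ω) - hrruZ a b N X R (j - 1) := rfl
  rw [hY]
  filter_upwards [condExp_sub (h.integrable_div hj) hZint _, h.condExp_div_eq_hrruZ hj]
    with ω h₁ h₂
  rw [h₁, Pi.sub_apply, h₂, condExp_of_stronglyMeasurable (h.hrruG_le _) hZ hZint, sub_self,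
    Pi.zero_apply]

theorem integral_sq_sum_hrruY_le [IsProbabilityMeasure μ] (h : IsHRRU μ a b N X R) (n : ℕ) :
    ∫ ω, (∑ j ∈ Finset.Icc 1 n, hrruY a b N X R j ω) ^ 2 ∂μ ≤ n := by
  simpa using integral_sq_sum_le_of_condExp_eq_zero (s := Finset.Icc 1 n)
    (fun j _ => h.hrruG_le (j - 1)) (fun j _ => (h.measurable_hrruY j).aestronglyMeasurable)
    (fun j hj => h.abs_hrruY_le_one (Finset.mem_Icc.1 hj).1)
    (fun i hi j hj hij => ((measurable_hrruF_hrruY (j := i) (n := j - 1) (by grind)).mono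
      (hrruF_le_hrruG _) le_rfl).stronglyMeasurable)
    (fun j hj => h.condExp_hrruY (Finset.mem_Icc.1 hj).1)

end IsHRRU

/-- in the HRRU model, the empirical means
`M n = (1/n) ∑_{j=1}^n X j / N j` converge almost surely and in `L¹` to the same
random variable `Z` which is the almost sure limit of the proportions `Z n`. -/
theorem stmt5
    {Ω : Type*} [m0 : MeasurableSpace Ω] (μ : Measure Ω) [IsProbabilityMeasure μ]
    (a b : ℕ) (N X R : ℕ → Ω → ℕ) (h : IsHRRU μ a b N X R)
    (Zlim : Ω → ℝ)
    (hZ : ∀ᵐ ω ∂μ, Tendsto (fun n => hrruZ a b N X R n ω) atTop (𝓝 (Zlim ω))) :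
    (∀ᵐ ω ∂μ, Tendsto
        (fun n : ℕ => (n : ℝ)⁻¹ * ∑ j ∈ Finset.Icc 1 n, (X j ω : ℝ) / (N j ω : ℝ))
        atTop (𝓝 (Zlim ω))) ∧
      Tendsto (fun n : ℕ => ∫ ω,
          |(n : ℝ)⁻¹ * ∑ j ∈ Finset.Icc 1 n, (X j ω : ℝ) / (N j ω : ℝ) - Zlim ω| ∂μ)
        atTop (𝓝 0) := by
  have hY := ae_tendsto_sum_Icc_div_of_integral_sq_le
    (fun j => (h.measurable_hrruY j).aemeasurable) (fun j hj => h.abs_hrruY_le_one hj)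
    fun n => (h.integral_sq_sum_hrruY_le n).trans_eq (one_mul _).symm
  have hM : ∀ᵐ ω ∂μ, Tendsto
      (fun n : ℕ => (n : ℝ)⁻¹ * ∑ j ∈ Finset.Icc 1 n, (X j ω : ℝ) / (N j ω : ℝ))
      atTop (𝓝 (Zlim ω)) := by
    filter_upwards [hY, hZ] with ω hYω hZω
    have hlim := hYω.add hZω.cesaro
    rw [zero_add] at hlim
    refine hlim.congr fun n => ?_
    simp only [hrruY, Finset.sum_sub_distrib]
    rw [Finset.sum_Icc_one_sub_one (fun i => hrruZ a b N X R i ω)]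
    ring
  refine ⟨hM, tendsto_integral_abs_sub_of_ae_tendsto (C := 1) (fun n => ?_) (fun n ω => ?_) hM⟩
  · have := h.measX
    have := h.measN
    exact (by fun_prop : Measurable fun ω =>
      (n : ℝ)⁻¹ * ∑ j ∈ Finset.Icc 1 n, (X j ω : ℝ) / N j ω).aestronglyMeasurable
  · exact abs_inv_mul_sum_Icc_le (fun j hj => Nat.abs_cast_div_le_one (h.rangeX j hj ω)) n
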